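/- For every k ≥ 0, the paired sum (p_{2k+1}+p_{2k+2})/p_{2k+1}² + (p_{2k+2}+p_{2k+3})/p_{2k+2}² is strictly less than 4√2/r^{2k} + 1/(9·r^{6k}), where r = 1+√2. -/

import Mathlib

/-!
Binet's formula with `x = (1 + √2) ^ n`, `n` odd, gives `2√2 p_n = x + x⁻¹`,
`2√2 p_{n+1} = r x - (r x)⁻¹` and `2√2 p_{n+2} = r² x + (r² x)⁻¹`, and `(1 - √2) = -r⁻¹` turns each
summand into a rational function of `x` with coefficients in `ℚ(√2)`. Comparing these with their
leading terms, the first summand is at most `4r/x - 3/x³` and the second at most `4/x + 3/x³`;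
the cubic corrections cancel and `4r + 4 = 4√2 r`, so the pair is at most `4√2 / r^(n-1)`.
-/

/-- The Pell numbers: `p 0 = 0`, `p 1 = 1`, `p 2 = 2`, `p (n+2) = 2 p (n+1) + p n`. -/
def pell : ℕ → ℤ
  | 0 => 0
  | 1 => 1
  | (n+2) => 2 * pell (n+1) + pell n

lemma sqrt_two_sq : √2 ^ 2 = 2 := Real.sq_sqrt (by norm_num)

lemma coe_pell_eq (n : ℕ) :
    (pell n : ℝ) = ((1 + √2) ^ n - (1 - √2) ^ n) / (2 * √2) := by
  induction n using Nat.strong_induction_on with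
  | _ n ih =>
    match n, ih with
    | 0, _ => simp [pell]
    | 1, _ => field_simp; simp [pell]; ring
    | n + 2, ih =>
      rw [pell, Int.cast_add, Int.cast_mul, ih n (by omega), ih (n + 1) (by omega)]
      field_simp
      linear_combination ((1 - √2) ^ n - (1 + √2) ^ n) * sqrt_two_sq

lemma one_sub_sqrt_two_eq : 1 - √2 = -(1 + √2)⁻¹ := by
  field_simp
  linear_combination -sqrt_two_sq

lemma coe_pell_of_odd {n : ℕ} (hn : Odd n) :
    (pell n : ℝ) = ((1 + √2) ^ n + ((1 + √2) ^ n)⁻¹) / (2 * √2) := by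
  rw [coe_pell_eq, one_sub_sqrt_two_eq, hn.neg_pow, inv_pow, sub_neg_eq_add]

lemma coe_pell_of_even {n : ℕ} (hn : Even n) :
    (pell n : ℝ) = ((1 + √2) ^ n - ((1 + √2) ^ n)⁻¹) / (2 * √2) := by
  rw [coe_pell_eq, one_sub_sqrt_two_eq, hn.neg_pow, inv_pow]

noncomputable def pellTerm (n : ℕ) : ℝ := (pell n + pell (n + 1)) / (pell n : ℝ) ^ 2

lemma pellTerm_le_of_odd {n : ℕ} (hn : Odd n) :
    pellTerm n ≤ 4 * (1 + √2) / (1 + √2) ^ n - 3 / ((1 + √2) ^ n) ^ 3 := by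
  have hs1 : 1 < √2 := by rw [Real.lt_sqrt] <;> norm_num
  have h3 : √2 ^ 3 = 2 * √2 := by rw [pow_succ, sqrt_two_sq]
  have hx : 1 ≤ (1 + √2) ^ n := one_le_pow₀ (by linarith)
  rw [pellTerm, coe_pell_of_odd hn, coe_pell_of_even hn.add_one, pow_succ]
  generalize (1 + √2) ^ n = x at hx ⊢
  rw [div_le_iff₀ (by positivity), ← sub_nonneg]
  field_simp
  ring_nf
  simp only [sqrt_two_sq, h3]
  ring_nf
  have hx2 : 1 ≤ x ^ 2 := one_le_pow₀ hx
  have hx4 : 1 ≤ x ^ 4 := one_le_pow₀ hx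
  nlinarith [mul_le_mul_of_nonneg_left hx2 (by linarith : (0:ℝ) ≤ √2),
    mul_le_mul_of_nonneg_left hx4 (by linarith : (0:ℝ) ≤ √2)]

lemma pellTerm_succ_le_of_odd {n : ℕ} (hn : Odd n) :
    pellTerm (n + 1) ≤ 4 / (1 + √2) ^ n + 3 / ((1 + √2) ^ n) ^ 3 := by
  have hs1 : 1 < √2 := by rw [Real.lt_sqrt] <;> norm_num
  have h3 : √2 ^ 3 = 2 * √2 := by rw [pow_succ, sqrt_two_sq]
  have h4 : √2 ^ 4 = 4 := by rw [show 4 = 2 * 2 by rfl, pow_mul, sqrt_two_sq]; norm_num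
  have h5 : √2 ^ 5 = 4 * √2 := by rw [pow_succ, h4]
  have hx : 1 ≤ (1 + √2) ^ n := one_le_pow₀ (by linarith)
  rw [pellTerm, coe_pell_of_even hn.add_one, coe_pell_of_odd (hn.add_one.add_one), pow_succ,
    pow_succ, pow_succ]
  generalize (1 + √2) ^ n = x at hx ⊢
  have hden : 0 < x ^ 2 * (1 + √2) ^ 2 - 1 := by
    have : 1 < (1 + √2) ^ 2 := one_lt_pow₀ (by linarith) two_ne_zero
    nlinarith [one_le_pow₀ (n := 2) hx]
  field_simp
  rw [← sub_nonneg]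
  ring_nf
  simp only [sqrt_two_sq, h3, h4, h5]
  ring_nf
  have hx2 : 1 ≤ x ^ 2 := one_le_pow₀ hx
  nlinarith [mul_le_mul_of_nonneg_left hx2 (by linarith : (0:ℝ) ≤ √2)]

lemma pellTerm_add_pellTerm_succ_le (k : ℕ) :
    pellTerm (2 * k + 1) + pellTerm (2 * k + 2) ≤ 4 * √2 / (1 + √2) ^ (2 * k) := by
  have hn : Odd (2 * k + 1) := odd_two_mul_add_one k
  calc pellTerm (2 * k + 1) + pellTerm (2 * k + 2)
      ≤ (4 * (1 + √2) / (1 + √2) ^ (2 * k + 1) - 3 / ((1 + √2) ^ (2 * k + 1)) ^ 3)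
        + (4 / (1 + √2) ^ (2 * k + 1) + 3 / ((1 + √2) ^ (2 * k + 1)) ^ 3) :=
        add_le_add (pellTerm_le_of_odd hn) (pellTerm_succ_le_of_odd hn)
    _ = (4 * √2 * (1 + √2)) / ((1 + √2) ^ (2 * k) * (1 + √2)) := by
        rw [← pow_succ, show 4 * √2 * (1 + √2) = 4 * (1 + √2) + 4 by
          linear_combination 4 * sqrt_two_sq]
        ring
    _ = 4 * √2 / (1 + √2) ^ (2 * k) := mul_div_mul_right _ _ (by positivity)

theorem stmt_5 (k : ℕ) :
    ((pell (2*k+1) : ℝ) + (pell (2*k+2) : ℝ)) / (pell (2*k+1) : ℝ) ^ 2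
      + ((pell (2*k+2) : ℝ) + (pell (2*k+3) : ℝ)) / (pell (2*k+2) : ℝ) ^ 2
    < 4 * Real.sqrt 2 / (1 + Real.sqrt 2) ^ (2*k)
      + 1 / (9 * (1 + Real.sqrt 2) ^ (6*k)) :=
  calc _ = pellTerm (2 * k + 1) + pellTerm (2 * k + 2) := rfl
    _ ≤ 4 * √2 / (1 + √2) ^ (2 * k) := pellTerm_add_pellTerm_succ_le k
    _ < _ := lt_add_of_pos_right _ (by positivity)
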